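/- In the simplicial setup, if the affine semigroup ring K[B] is Buchsbaum (in particular, if it is Cohen–Macaulay), then the initial ideal in_≺(ker π) of the simplicial toric ideal with respect to the graded reverse lexicographic order is generated by elements of degree at most r(K[B]) + 1. -/

import Mathlib

/-!
The initial ideal is spanned by the minimal nonstandard monomials, a monomial being standard when
it is the `≺`-least monomial with its image in `K[B]`; so it suffices to bound the degree of a
minimal nonstandard monomial `n`. If `n` involves only `x`-variables, dropping one variable leaves
a standard `x`-monomial, whose value lies in `B_A` and so has degree `≤ r`. Otherwise let `y_j` be
the last `y`-variable of `n`. If no `t^{e_l}` with `l > j` divides `π(n)`, multiplying the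
standard monomial `n / y_j` by `y_j` keeps it standard, which is impossible; hence
`π(n) = t^{w + e_l}` with `l > j`. The `x`-part `μ` of `n` is standard with value `u ∈ B_A`, and
the Buchsbaum shape of the class of `u` forces `u = h + e_l` with `h + e_j ∈ B_A`. Then `μ·y_j` has
the same value as `m_{h+e_j}·y_l`, which is `≺`-smaller, so `μ·y_j` is nonstandard and by
minimality equals `n`, of degree `≤ r + 1`.
-/

namespace SimplicialToric

/-- `eVec d α i` is `α` times the `i`-th standard basis vector of `ℕ^d`. -/
def eVec (d α : ℕ) (i : Fin d) : Fin d → ℕ := fun j => if j = i then α else 0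

/-- The Hilbert basis of a submonoid `B ⊆ ℕ^d`: the set of irreducible elements
(in `ℕ^d` the only unit is `0`). -/
def Hilb {d : ℕ} (B : AddSubmonoid (Fin d → ℕ)) : Set (Fin d → ℕ) :=
  {b | b ∈ B ∧ b ≠ 0 ∧ ∀ x ∈ B, ∀ y ∈ B, b = x + y → x = 0 ∨ y = 0}

/-- The submonoid `A = Σᵢ ℤ≥0·eᵢ = αℤ≥0^d`. -/
def Amon (d α : ℕ) : AddSubmonoid (Fin d → ℕ) :=
  AddSubmonoid.closure (Set.range (eVec d α))

/-- `B_A = {x ∈ B : x − a ∉ B for every a ∈ A \ {0}}`. -/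
def BA {d : ℕ} (B : AddSubmonoid (Fin d → ℕ)) (α : ℕ) : Set (Fin d → ℕ) :=
  {x | x ∈ B ∧ ∀ z ∈ Amon d α, z ≠ 0 → ∀ y ∈ B, x ≠ y + z}

/-- The generators `a₁,…,a_c,e₁,…,e_d` of `B`, indexed by the variables of
`S = K[x₁,…,x_c,y₁,…,y_d]`; variable `Fin.castAdd d i` is `xᵢ`, variable
`Fin.natAdd c j` is `yⱼ`. -/
def gens (c d α : ℕ) (a : Fin c → Fin d → ℕ) : Fin (c + d) → Fin d → ℕ :=
  Fin.addCases a (eVec d α)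

/-- The element of `B` represented by the monomial with exponent vector `σ`:
`π(x^μ y^ν) = t^(valE σ)`. -/
def valE (c d α : ℕ) (a : Fin c → Fin d → ℕ) (σ : Fin (c + d) →₀ ℕ) : Fin d → ℕ :=
  ∑ v : Fin (c + d), σ v • gens c d α a v

/-- total degree of a monomial (exponent vector). -/
def degE {N : ℕ} (σ : Fin N →₀ ℕ) : ℕ := ∑ v, σ v

/-- the graded reverse lexicographic order: `grevlex σ τ` means `σ ≺ τ`,
i.e. `deg σ < deg τ`, or degrees agree and the last nonzero entry of `τ − σ`
is negative. -/
def grevlex {N : ℕ} (σ τ : Fin N →₀ ℕ) : Prop :=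
  degE σ < degE τ ∨ (degE σ = degE τ ∧ ∃ k, τ k < σ k ∧ ∀ l, k < l → σ l = τ l)

/-- `x ∼ y` iff `x − y ∈ gp(A) = αℤ^d`. -/
def Rel {d : ℕ} (α : ℕ) (x y : Fin d → ℕ) : Prop :=
  ∀ j, (α : ℤ) ∣ (x j : ℤ) - (y j : ℤ)

/-- `Γ` is an equivalence class of `B_A` modulo `αℤ^d`. -/
def IsClass {d : ℕ} (B : AddSubmonoid (Fin d → ℕ)) (α : ℕ) (Γ : Set (Fin d → ℕ)) : Prop :=
  ∃ x ∈ BA B α, Γ = {y | y ∈ BA B α ∧ Rel α x y}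

/-- the total order on an equivalence class of `B_A`: `b ≺ c` iff the last
nonzero entry of `b − c` is negative. -/
def ltCls {d : ℕ} (x y : Fin d → ℕ) : Prop :=
  ∃ k, x k < y k ∧ ∀ l, k < l → x l = y l

/-- `joinSub x y = x∨y − y`, where `x∨y` is the componentwise maximum. -/
def joinSub {d : ℕ} (x y : Fin d → ℕ) : Fin d → ℕ := fun j => max (x j) (y j) - y j

/-- the monomial with exponents `σ` lies in `T = K[y₁,…,y_d]`. -/
def yOnly (c d : ℕ) (σ : Fin (c + d) →₀ ℕ) : Prop := ∀ i : Fin c, σ (Fin.castAdd d i) = 0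

/-- the monomial with exponents `σ` involves only the `x`-variables. -/
def xOnly (c d : ℕ) (σ : Fin (c + d) →₀ ℕ) : Prop := ∀ j : Fin d, σ (Fin.natAdd c j) = 0

/-- the set `N₁`, for a given choice `m` of the minimal monomials `m_b`. -/
def N1set (c d α : ℕ) (a : Fin c → Fin d → ℕ) (B : AddSubmonoid (Fin d → ℕ))
    (m : (Fin d → ℕ) → (Fin (c + d) →₀ ℕ)) : Set (Fin (c + d) →₀ ℕ) :=
  {n | ∃ (i : Fin c) (b : Fin d → ℕ), b ∈ BA B α ∧
    n = Finsupp.single (Fin.castAdd d i) 1 + m b ∧ n ≠ m (a i + b)}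

/-- the set `N₂ = ∪_Γ N_Γ`, where `N_Γ = {n(bᵢ,bⱼ) = m_{bⱼ}·m_{bᵢ∨bⱼ−bⱼ} : bᵢ ≺ bⱼ in Γ}`. -/
def N2set {d : ℕ} (c α : ℕ) (B : AddSubmonoid (Fin d → ℕ))
    (m : (Fin d → ℕ) → (Fin (c + d) →₀ ℕ)) : Set (Fin (c + d) →₀ ℕ) :=
  {n | ∃ Γ, IsClass B α Γ ∧ ∃ bi ∈ Γ, ∃ bj ∈ Γ, ltCls bi bj ∧ n = m bj + m (joinSub bi bj)}

/-- `σ` is the exponent vector of the initial (i.e. `≺`-largest) term of `f`. -/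
def IsLeadMon {N : ℕ} {K : Type*} [Field K] (f : MvPolynomial (Fin N) K)
    (σ : Fin N →₀ ℕ) : Prop :=
  σ ∈ f.support ∧ ∀ τ ∈ f.support, τ = σ ∨ grevlex τ σ

/-- the initial ideal of `I` with respect to the graded reverse lexicographic order. -/
noncomputable def initialIdeal {N : ℕ} {K : Type*} [Field K] (I : Ideal (MvPolynomial (Fin N) K)) :
    Ideal (MvPolynomial (Fin N) K) :=
  Ideal.span {g | ∃ f ∈ I, ∃ σ, IsLeadMon f σ ∧ g = MvPolynomial.monomial σ (1 : K)}

end SimplicialToric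

namespace SimplicialToric

section Monomials

variable {N : ℕ}

theorem degE_eq_degree (σ : Fin N →₀ ℕ) : degE σ = σ.degree :=
  (Finsupp.degree_eq_sum σ).symm

theorem degE_add (σ τ : Fin N →₀ ℕ) : degE (σ + τ) = degE σ + degE τ := by
  simp only [degE_eq_degree, map_add]

theorem degE_single (v : Fin N) (k : ℕ) : degE (Finsupp.single v k) = k := by
  rw [degE_eq_degree, Finsupp.degree_single]

theorem sub_single_one_add {σ : Fin N →₀ ℕ} {v : Fin N} (h : σ v ≠ 0) :
    σ - Finsupp.single v 1 + Finsupp.single v 1 = σ :=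
  tsub_add_cancel_of_le (Finsupp.single_le_iff.2 (Nat.one_le_iff_ne_zero.2 h))

theorem sub_single_one_lt {σ : Fin N →₀ ℕ} {v : Fin N} (h : σ v ≠ 0) :
    σ - Finsupp.single v 1 < σ := by
  conv_rhs => rw [← sub_single_one_add h]
  exact lt_add_of_pos_right _ (pos_iff_ne_zero.2 (Finsupp.single_ne_zero.2 one_ne_zero))

theorem grevlex_asymm {σ τ : Fin N →₀ ℕ} (h₁ : grevlex σ τ) (h₂ : grevlex τ σ) : False := by
  rcases h₁ with h₁ | ⟨hd₁, k₁, hk₁, hl₁⟩ <;> rcases h₂ with h₂ | ⟨hd₂, k₂, hk₂, hl₂⟩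
  · omega
  · omega
  · omega
  rcases lt_trichotomy k₁ k₂ with h | rfl | h
  · have := hl₁ k₂ h; omega
  · omega
  · have := hl₂ k₁ h; omega

theorem grevlex_add_right {σ τ : Fin N →₀ ℕ} (ρ : Fin N →₀ ℕ) (h : grevlex σ τ) :
    grevlex (σ + ρ) (τ + ρ) := by
  simp only [grevlex, degE_add, Finsupp.add_apply] at h ⊢
  rcases h with h | ⟨hd, k, hk, hl⟩
  · omega
  · exact Or.inr ⟨by omega, k, by omega, fun l hkl => by rw [hl l hkl]⟩

end Monomials

section Valuation

variable {c d α : ℕ} {a : Fin c → Fin d → ℕ}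

theorem valE_add (σ τ : Fin (c + d) →₀ ℕ) :
    valE c d α a (σ + τ) = valE c d α a σ + valE c d α a τ := by
  simp [valE, add_smul, Finset.sum_add_distrib]

theorem valE_single (v : Fin (c + d)) (k : ℕ) :
    valE c d α a (Finsupp.single v k) = k • gens c d α a v := by
  rw [valE, Finset.sum_eq_single v (fun w _ hw => by simp [Ne.symm hw])
    (by simp)]
  simp

theorem gens_natAdd (j : Fin d) : gens c d α a (Fin.natAdd c j) = eVec d α j :=
  Fin.addCases_right j

theorem valE_add_single_natAdd (σ : Fin (c + d) →₀ ℕ) (j : Fin d) :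
    valE c d α a (σ + Finsupp.single (Fin.natAdd c j) 1) = valE c d α a σ + eVec d α j := by
  simp [valE_add, valE_single, gens]

theorem valE_eq_sub_single_add {σ : Fin (c + d) →₀ ℕ} {v : Fin (c + d)} (h : σ v ≠ 0) :
    valE c d α a σ = valE c d α a (σ - Finsupp.single v 1) + gens c d α a v := by
  conv_lhs => rw [← sub_single_one_add h]
  rw [valE_add, valE_single, one_smul]

theorem valE_of_yOnly {σ : Fin (c + d) →₀ ℕ} (h : yOnly c d σ) :
    valE c d α a σ = α • fun j => σ (Fin.natAdd c j) := by
  funext j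
  simp [valE, Finset.sum_apply, Fin.sum_univ_add, h _, gens, eVec, mul_comm]

theorem sum_gens (hdeg : ∀ i, ∑ j, a i j = α) (v : Fin (c + d)) :
    ∑ j, gens c d α a v j = α := by
  induction v using Fin.addCases with
  | left i => simpa [gens] using hdeg i
  | right j => simp [gens, eVec]

theorem sum_valE (hdeg : ∀ i, ∑ j, a i j = α) (σ : Fin (c + d) →₀ ℕ) :
    ∑ j, valE c d α a σ j = α * degE σ := by
  simp only [valE, Finset.sum_apply, Pi.smul_apply, smul_eq_mul, degE, Finset.mul_sum]
  rw [Finset.sum_comm]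
  exact Finset.sum_congr rfl fun v _ => by rw [← Finset.mul_sum, sum_gens hdeg, mul_comm]

theorem degE_eq_of_valE_eq (hα : 0 < α) (hdeg : ∀ i, ∑ j, a i j = α)
    {σ τ : Fin (c + d) →₀ ℕ} (h : valE c d α a σ = valE c d α a τ) : degE σ = degE τ := by
  have := sum_valE hdeg σ
  rw [h, sum_valE hdeg τ] at this
  exact (Nat.eq_of_mul_eq_mul_left hα this).symm

theorem valE_mem {B : AddSubmonoid (Fin d → ℕ)} (hgens : ∀ v, gens c d α a v ∈ B)
    (σ : Fin (c + d) →₀ ℕ) : valE c d α a σ ∈ B :=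
  sum_mem fun v _ => B.nsmul_mem (hgens v) _

theorem exists_xOnly_add_yOnly (σ : Fin (c + d) →₀ ℕ) :
    ∃ μ ν, xOnly c d μ ∧ yOnly c d ν ∧ σ = μ + ν := by
  refine ⟨σ.filter (fun v => (v : ℕ) < c), σ.filter (fun v => ¬ (v : ℕ) < c),
    fun j => ?_, fun i => ?_, (Finsupp.filter_add_filter_not σ _).symm⟩
  · simp
  · simp

end Valuation

section Monoid

variable {d α : ℕ} {B : AddSubmonoid (Fin d → ℕ)}

theorem eVec_mem_Amon (k : Fin d) : eVec d α k ∈ Amon d α :=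
  AddSubmonoid.subset_closure ⟨k, rfl⟩

theorem eVec_ne_zero (hα : 0 < α) (k : Fin d) : eVec d α k ≠ 0 := fun h => by
  simpa [eVec, hα.ne'] using congrFun h k

theorem dvd_eVec (k j : Fin d) : α ∣ eVec d α k j := by
  unfold eVec; split_ifs <;> simp

theorem mem_Amon_iff {z : Fin d → ℕ} : z ∈ Amon d α ↔ ∀ j, α ∣ z j := by
  refine ⟨fun hz j => ?_, fun hz => ?_⟩
  · induction hz using AddSubmonoid.closure_induction with
    | mem x hx => obtain ⟨k, rfl⟩ := hx; exact dvd_eVec k j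
    | zero => simp
    | add x y _ _ hx hy => exact dvd_add hx hy
  · have hsum : z = ∑ j, (z j / α) • eVec d α j := by
      funext i
      simp [Finset.sum_apply, eVec, Nat.div_mul_cancel (hz i)]
    rw [hsum]
    exact sum_mem fun j _ => AddSubmonoid.nsmul_mem _ (eVec_mem_Amon j) _

theorem Amon_le (he : ∀ k, eVec d α k ∈ B) : Amon d α ≤ B :=
  AddSubmonoid.closure_le.2 (Set.range_subset_iff.2 he)

theorem exists_eq_add_eVec_of_mem_Amon {z : Fin d → ℕ} (hz : z ∈ Amon d α) (h0 : z ≠ 0) :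
    ∃ k, ∃ z' ∈ Amon d α, z = z' + eVec d α k := by
  induction hz using AddSubmonoid.closure_induction with
  | mem x hx => obtain ⟨k, rfl⟩ := hx; exact ⟨k, 0, zero_mem _, (zero_add _).symm⟩
  | zero => exact absurd rfl h0
  | add x y hx hy ihx ihy =>
    by_cases hx0 : x = 0
    · subst hx0
      simpa using ihy (by simpa using h0)
    · obtain ⟨k, x', hx', rfl⟩ := ihx hx0
      exact ⟨k, x' + y, add_mem hx' hy, add_right_comm _ _ _⟩

theorem exists_mem_BA_add_mem_Amon {b : Fin d → ℕ} (hb : b ∈ B) :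
    ∃ b₀ ∈ BA B α, ∃ z ∈ Amon d α, b = b₀ + z := by
  induction b using WellFoundedLT.induction with
  | _ b ih =>
    by_cases hbA : b ∈ BA B α
    · exact ⟨b, hbA, 0, zero_mem _, (add_zero b).symm⟩
    simp only [BA, Set.mem_ofPred_eq, hb, true_and, not_forall, not_not] at hbA
    obtain ⟨z, hz, hz0, y, hy, rfl⟩ := hbA
    obtain ⟨b₀, hb₀, z', hz', rfl⟩ := ih y (lt_add_of_pos_right y (pos_iff_ne_zero.2 hz0)) hy
    exact ⟨b₀, hb₀, z' + z, add_mem hz' hz, add_assoc _ _ _⟩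

theorem rel_of_add_eq_add {u v x y : Fin d → ℕ} (h : u + x = v + y) (hx : ∀ j, α ∣ x j)
    (hy : ∀ j, α ∣ y j) : Rel α u v := fun j => by
  have hj : (u j : ℤ) - v j = y j - x j := by
    have := congrFun h j
    simp only [Pi.add_apply] at this
    omega
  rw [hj]
  exact dvd_sub (Int.natCast_dvd_natCast.2 (hy j)) (Int.natCast_dvd_natCast.2 (hx j))

theorem eq_of_rel_of_le {h b : Fin d → ℕ} (hh : h ∈ B) (hb : b ∈ BA B α)
    (hle : h ≤ b) (hrel : Rel α h b) : b = h := by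
  have hz : b - h ∈ Amon d α := mem_Amon_iff.2 fun j => by
    have := hrel j
    rw [← dvd_neg, neg_sub, ← Nat.cast_sub (hle j)] at this
    exact_mod_cast this
  by_contra hne
  exact hb.2 _ hz (fun h0 => hne (le_antisymm (tsub_eq_zero_iff_le.1 h0) hle)) h hh
    (add_tsub_cancel_of_le hle).symm

end Monoid

section Classes

variable {d α : ℕ} {B : AddSubmonoid (Fin d → ℕ)}

/-- The classes of `B_A` in the Buchsbaum case: the ideal `Ĩᵢ` of each class is `T` or `T₊`. -/
def BuchsbaumClasses (B : AddSubmonoid (Fin d → ℕ)) (α : ℕ) : Prop :=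
  ∀ Γ, IsClass B α Γ → ∀ h : Fin d → ℕ, (∀ j, IsLeast {v | ∃ b ∈ Γ, v = b j} (h j)) →
    h ∈ Γ ∨ ((∀ b ∈ Γ, ∃ k, b = h + eVec d α k) ∧ ∀ k, h + eVec d α k ∈ Γ)

theorem BuchsbaumClasses.dichotomy (hB : BuchsbaumClasses B α) {u : Fin d → ℕ}
    (hu : u ∈ BA B α) :
    (∀ w ∈ BA B α, Rel α u w → w = u) ∨
      ∃ h, (∀ w ∈ BA B α, Rel α u w → ∃ k, w = h + eVec d α k) ∧
        ∀ k, h + eVec d α k ∈ BA B α := by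
  set Γ : Set (Fin d → ℕ) := {w | w ∈ BA B α ∧ Rel α u w}
  have huΓ : u ∈ Γ := ⟨hu, fun j => by simp⟩
  have hleast : ∀ j, IsLeast {v | ∃ b ∈ Γ, v = b j} (sInf {v | ∃ b ∈ Γ, v = b j}) :=
    fun j => ⟨Nat.sInf_mem ⟨u j, u, huΓ, rfl⟩, fun v hv => Nat.sInf_le hv⟩
  set h : Fin d → ℕ := fun j => sInf {v | ∃ b ∈ Γ, v = b j}
  rcases hB Γ ⟨u, hu, rfl⟩ h hleast with ⟨hhBA, hhrel⟩ | ⟨hshape, hcorner⟩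
  · have hΓ : ∀ w ∈ Γ, w = h := fun w ⟨hw, hwrel⟩ =>
      eq_of_rel_of_le hhBA.1 hw (fun j => (hleast j).2 ⟨w, ⟨hw, hwrel⟩, rfl⟩)
        fun j => by simpa using dvd_sub (hwrel j) (hhrel j)
    exact Or.inl fun w hw hwrel => (hΓ w ⟨hw, hwrel⟩).trans (hΓ u huΓ).symm
  · exact Or.inr ⟨h, fun w hw hwrel => hshape w ⟨hw, hwrel⟩, fun k => (hcorner k).1⟩

theorem BuchsbaumClasses.exists_eq_add_eVec (hα : 0 < α) (hB : BuchsbaumClasses B α)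
    {u w v : Fin d → ℕ} {l : Fin d} (hu : u ∈ BA B α) (hw : w ∈ B)
    (heq : u + α • v = w + eVec d α l) (hvl : v l = 0) :
    ∃ h, u = h + eVec d α l ∧ ∀ k, h + eVec d α k ∈ BA B α := by
  obtain ⟨w₀, hw₀, z, hz, rfl⟩ := exists_mem_BA_add_mem_Amon (α := α) hw
  have hrel : Rel α u w₀ :=
    rel_of_add_eq_add (x := α • v) (y := z + eVec d α l) (by rw [heq, add_assoc])
      (fun j => by simp) fun j => dvd_add (mem_Amon_iff.1 hz j) (dvd_eVec l j)
  have hl : u l = w₀ l + z l + α := by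
    simpa [hvl, eVec] using congrFun heq l
  rcases hB.dichotomy hu with hpoint | ⟨h, hshape, hcorner⟩
  · have := hpoint w₀ hw₀ hrel
    subst this
    omega
  · obtain ⟨k, rfl⟩ := hshape u hu fun j => by simp
    obtain ⟨k', rfl⟩ := hshape w₀ hw₀ hrel
    have hkl : k = l := by
      by_contra hkl
      simp [eVec, Ne.symm hkl] at hl
      omega
    exact ⟨h, hkl ▸ rfl, hcorner⟩

end Classes

/-- The standard monomials, i.e. those outside `in_≺(ker π)`. -/
def IsStandard (c d α : ℕ) (a : Fin c → Fin d → ℕ) (σ : Fin (c + d) →₀ ℕ) : Prop :=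
  ∀ τ, valE c d α a τ = valE c d α a σ → τ = σ ∨ grevlex σ τ

section Standard

variable {c d α : ℕ} {a : Fin c → Fin d → ℕ} {B : AddSubmonoid (Fin d → ℕ)}
  {σ τ : Fin (c + d) →₀ ℕ}

theorem IsStandard.not_grevlex (hσ : IsStandard c d α a σ) (h : valE c d α a τ = valE c d α a σ) :
    ¬ grevlex τ σ := fun hτσ => by
  rcases hσ τ h with rfl | hστ
  · exact grevlex_asymm hτσ hτσ
  · exact grevlex_asymm hτσ hστ

theorem grevlex_of_lt_natAdd {l : Fin d} (hdeg : degE τ = degE σ)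
    (hl : σ (Fin.natAdd c l) < τ (Fin.natAdd c l))
    (hagree : ∀ l', l < l' → τ (Fin.natAdd c l') = σ (Fin.natAdd c l')) : grevlex τ σ := by
  refine Or.inr ⟨hdeg, Fin.natAdd c l, hl, fun v hv => ?_⟩
  have hv' : c + (l : ℕ) < v := hv
  obtain ⟨l', rfl⟩ : ∃ l', v = Fin.natAdd c l' :=
    ⟨⟨v - c, by omega⟩, Fin.ext (by simp only [Fin.val_natAdd]; omega)⟩
  exact hagree l' (Fin.lt_def.2 (by simp only [Fin.val_natAdd] at hv'; omega))

theorem IsStandard.apply_natAdd_le (hα : 0 < α) (hdeg : ∀ i, ∑ j, a i j = α)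
    (hσ : IsStandard c d α a σ) (h : valE c d α a τ = valE c d α a σ) {l : Fin d}
    (hagree : ∀ l', l < l' → τ (Fin.natAdd c l') = σ (Fin.natAdd c l')) :
    τ (Fin.natAdd c l) ≤ σ (Fin.natAdd c l) :=
  not_lt.1 fun hl => hσ.not_grevlex h
    (grevlex_of_lt_natAdd (degE_eq_of_valE_eq hα hdeg h) hl hagree)

theorem exists_last_natAdd (h : ¬ xOnly c d σ) :
    ∃ j, σ (Fin.natAdd c j) ≠ 0 ∧ ∀ l, j < l → σ (Fin.natAdd c l) = 0 := by
  obtain ⟨j₀, hj₀⟩ := not_forall.1 h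
  obtain ⟨j, -, hj, hmax⟩ :=
    exists_maximal_ge_of_wellFoundedGT (fun j => σ (Fin.natAdd c j) ≠ 0) j₀ hj₀
  exact ⟨j, hj, fun l hjl => not_not.1 fun hl => (hjl.trans_le (hmax hl hjl.le)).false⟩

theorem IsStandard.xOnly_of_valE_eq (hα : 0 < α) (hdeg : ∀ i, ∑ j, a i j = α)
    (hσ : IsStandard c d α a σ) (hx : xOnly c d σ) (h : valE c d α a τ = valE c d α a σ) :
    xOnly c d τ := by
  by_contra hτ
  obtain ⟨j, hj, hlast⟩ := exists_last_natAdd hτ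
  have := hσ.apply_natAdd_le hα hdeg h (l := j) fun l hl => by rw [hlast l hl, hx l]
  rw [hx j] at this
  omega

theorem xOnly_of_valE_mem_BA (hα : 0 < α) (hgens : ∀ v, gens c d α a v ∈ B)
    (h : valE c d α a σ ∈ BA B α) : xOnly c d σ := fun j => by
  by_contra hj
  refine h.2 (eVec d α j) (eVec_mem_Amon j) (eVec_ne_zero hα j) _
    (valE_mem hgens (σ - Finsupp.single (Fin.natAdd c j) 1)) ?_
  rw [← gens_natAdd]
  exact valE_eq_sub_single_add hj

theorem IsStandard.valE_mem_BA (hα : 0 < α) (hdeg : ∀ i, ∑ j, a i j = α)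
    (hgens : ∀ v, gens c d α a v ∈ B)
    (hstd : ∀ b ∈ B, ∃ ρ, valE c d α a ρ = b ∧ IsStandard c d α a ρ)
    (hσ : IsStandard c d α a σ) (hx : xOnly c d σ) : valE c d α a σ ∈ BA B α := by
  refine ⟨valE_mem hgens σ, fun z hz hz0 y hy heq => ?_⟩
  obtain ⟨k, z', hz', rfl⟩ := exists_eq_add_eVec_of_mem_Amon hz hz0
  have hB : y + z' ∈ B := add_mem hy (Amon_le (fun k => gens_natAdd k ▸ hgens _) hz')
  obtain ⟨ρ, hρ, -⟩ := hstd _ hB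
  have hx' := hσ.xOnly_of_valE_eq hα hdeg hx (τ := ρ + Finsupp.single (Fin.natAdd c k) 1)
    (by rw [valE_add_single_natAdd, hρ, heq, add_assoc])
  simpa using hx' k

end Standard

section DegreeBound

variable {c d α : ℕ} {a : Fin c → Fin d → ℕ} {B : AddSubmonoid (Fin d → ℕ)}
  {σ n : Fin (c + d) →₀ ℕ}

theorem IsStandard.add_single_natAdd (hα : 0 < α) (hdeg : ∀ i, ∑ j, a i j = α)
    (hgens : ∀ v, gens c d α a v ∈ B)
    (hstd : ∀ b ∈ B, ∃ ρ, valE c d α a ρ = b ∧ IsStandard c d α a ρ)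
    (hn : IsStandard c d α a n) {j : Fin d} (hy : ∀ l, j < l → n (Fin.natAdd c l) = 0)
    (hno : ∀ l, j < l → ∀ w ∈ B,
      valE c d α a (n + Finsupp.single (Fin.natAdd c j) 1) ≠ w + eVec d α l) :
    IsStandard c d α a (n + Finsupp.single (Fin.natAdd c j) 1) := by
  set σ := n + Finsupp.single (Fin.natAdd c j) 1
  obtain ⟨ρ, hρ, hρstd⟩ := hstd _ (valE_mem hgens σ)
  have hρy : ∀ l, j < l → ρ (Fin.natAdd c l) = 0 := fun l hl => by
    by_contra h
    refine hno l hl _ (valE_mem hgens (ρ - Finsupp.single (Fin.natAdd c l) 1)) ?_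
    rw [← hρ, ← gens_natAdd]
    exact valE_eq_sub_single_add h
  have hρj : ρ (Fin.natAdd c j) ≠ 0 := fun h0 => by
    have := hρstd.apply_natAdd_le hα hdeg hρ.symm (τ := σ) (l := j)
      fun l hl => by simp [σ, hy l hl, hρy l hl, hl.ne]
    simp [σ, h0] at this
  set ρ' := ρ - Finsupp.single (Fin.natAdd c j) 1
  have hρ' : valE c d α a ρ' = valE c d α a n := by
    have h := valE_add_single_natAdd (α := α) (a := a) ρ' j
    rw [sub_single_one_add hρj, hρ, valE_add_single_natAdd] at h
    exact (add_right_cancel h).symm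
  rcases hn ρ' hρ' with h | h
  · have hρσ : ρ = σ :=
      (sub_single_one_add hρj).symm.trans (congrArg (· + Finsupp.single (Fin.natAdd c j) 1) h)
    rwa [hρσ] at hρstd
  · exact absurd (grevlex_add_right _ h) (sub_single_one_add hρj ▸ hρstd.not_grevlex hρ.symm)

theorem not_isStandard_of_valE_eq_add_eVec (hα : 0 < α) (hdeg : ∀ i, ∑ j, a i j = α)
    (hgens : ∀ v, gens c d α a v ∈ B)
    (hstd : ∀ b ∈ B, ∃ ρ, valE c d α a ρ = b ∧ IsStandard c d α a ρ)
    {g : Fin d → ℕ} {l : Fin d} (hg : g ∈ BA B α)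
    (hσ : ∀ l', l ≤ l' → σ (Fin.natAdd c l') = 0) (hval : valE c d α a σ = g + eVec d α l) :
    ¬ IsStandard c d α a σ := fun hσstd => by
  obtain ⟨ρ, hρ, -⟩ := hstd g hg.1
  have hρx : xOnly c d ρ := xOnly_of_valE_mem_BA hα hgens (hρ ▸ hg)
  have := hσstd.apply_natAdd_le hα hdeg (τ := ρ + Finsupp.single (Fin.natAdd c l) 1) (l := l)
    (by rw [valE_add_single_natAdd, hρ, hval])
    fun l' hl' => by simp [hρx l', hσ l' hl'.le, hl'.ne]
  simp [hρx l, hσ l le_rfl] at this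

theorem isStandard_of_lt (hn : Minimal (¬ IsStandard c d α a ·) n) (hσ : σ < n) :
    IsStandard c d α a σ :=
  not_not.1 (hn.not_prop_of_lt hσ)

theorem degE_le_of_valE_mem_BA (hdeg : ∀ i, ∑ j, a i j = α) {r : ℕ}
    (hr : IsGreatest {k | ∃ b ∈ BA B α, ∑ j, b j = α * k} r) (h : valE c d α a σ ∈ BA B α) :
    degE σ ≤ r :=
  hr.2 ⟨_, h, sum_valE hdeg σ⟩

theorem degE_le_of_minimal_of_xOnly (hα : 0 < α) (hdeg : ∀ i, ∑ j, a i j = α)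
    (hgens : ∀ v, gens c d α a v ∈ B)
    (hstd : ∀ b ∈ B, ∃ ρ, valE c d α a ρ = b ∧ IsStandard c d α a ρ) {r : ℕ}
    (hr : IsGreatest {k | ∃ b ∈ BA B α, ∑ j, b j = α * k} r)
    (hn : Minimal (¬ IsStandard c d α a ·) n) (hx : xOnly c d n) : degE n ≤ r + 1 := by
  obtain rfl | ⟨v, hv⟩ := eq_or_ne n 0 |>.imp_right Finsupp.ne_iff.1
  · simp [degE]
  have hp := sub_single_one_lt hv
  have hpx : xOnly c d (n - Finsupp.single v 1) := fun j =>
    Nat.eq_zero_of_le_zero (hx j ▸ Finsupp.le_def.1 hp.le (Fin.natAdd c j))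
  have hpr := degE_le_of_valE_mem_BA hdeg hr
    ((isStandard_of_lt hn hp).valE_mem_BA hα hdeg hgens hstd hpx)
  have hdegn := congrArg degE (sub_single_one_add hv)
  rw [degE_add, degE_single] at hdegn
  omega

theorem exists_valE_eq_add_eVec_of_minimal (hα : 0 < α) (hdeg : ∀ i, ∑ j, a i j = α)
    (hgens : ∀ v, gens c d α a v ∈ B)
    (hstd : ∀ b ∈ B, ∃ ρ, valE c d α a ρ = b ∧ IsStandard c d α a ρ)
    (hn : Minimal (¬ IsStandard c d α a ·) n) {j : Fin d} (hj : n (Fin.natAdd c j) ≠ 0)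
    (hlast : ∀ l, j < l → n (Fin.natAdd c l) = 0) :
    ∃ l, j < l ∧ ∃ w ∈ B, valE c d α a n = w + eVec d α l := by
  by_contra! hno
  have hp := sub_single_one_lt hj
  have hpn := sub_single_one_add hj
  have := (isStandard_of_lt hn hp).add_single_natAdd hα hdeg hgens hstd
    (fun l hl => Nat.eq_zero_of_le_zero (hlast l hl ▸ Finsupp.le_def.1 hp.le (Fin.natAdd c l)))
    fun l hl w hw => by rw [hpn]; exact hno l hl w hw
  exact hn.1 (hpn ▸ this)

theorem degE_le_of_minimal_of_not_xOnly (hα : 0 < α) (hdeg : ∀ i, ∑ j, a i j = α)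
    (hgens : ∀ v, gens c d α a v ∈ B)
    (hstd : ∀ b ∈ B, ∃ ρ, valE c d α a ρ = b ∧ IsStandard c d α a ρ) {r : ℕ}
    (hr : IsGreatest {k | ∃ b ∈ BA B α, ∑ j, b j = α * k} r) (hB : BuchsbaumClasses B α)
    (hn : Minimal (¬ IsStandard c d α a ·) n) (hx : ¬ xOnly c d n) : degE n ≤ r + 1 := by
  obtain ⟨j, hj, hlast⟩ := exists_last_natAdd hx
  obtain ⟨l, hjl, w, hw, hval⟩ :=
    exists_valE_eq_add_eVec_of_minimal hα hdeg hgens hstd hn hj hlast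
  obtain ⟨μ, ν, hμ, hν, rfl⟩ := exists_xOnly_add_yOnly n
  have hνj : ν (Fin.natAdd c j) ≠ 0 := by simpa [hμ j] using hj
  have hμstd : IsStandard c d α a μ :=
    isStandard_of_lt hn (lt_add_of_pos_right μ (pos_iff_ne_zero.2 fun h => hνj (by simp [h])))
  have huBA := hμstd.valE_mem_BA hα hdeg hgens hstd hμ
  obtain ⟨h, hu, hcorner⟩ := hB.exists_eq_add_eVec hα huBA hw
    (by rw [← valE_of_yOnly hν, ← valE_add, hval]) (by simpa [hμ l] using hlast l hjl)
  set p := μ + Finsupp.single (Fin.natAdd c j) 1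
  have hpn : p ≤ μ + ν :=
    add_le_add le_rfl (Finsupp.single_le_iff.2 (Nat.one_le_iff_ne_zero.2 hνj))
  have hp : ¬ IsStandard c d α a p :=
    not_isStandard_of_valE_eq_add_eVec hα hdeg hgens hstd (hcorner j)
      (fun l' hl' => by simp [p, hμ l', (hjl.trans_le hl').ne])
      (by rw [valE_add_single_natAdd, hu, add_right_comm])
  rw [le_antisymm (hn.2 hp hpn) hpn, degE_add, degE_single]
  have := degE_le_of_valE_mem_BA hdeg hr huBA
  omega

theorem degE_le_of_minimal (hα : 0 < α) (hdeg : ∀ i, ∑ j, a i j = α)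
    (hgens : ∀ v, gens c d α a v ∈ B)
    (hstd : ∀ b ∈ B, ∃ ρ, valE c d α a ρ = b ∧ IsStandard c d α a ρ) {r : ℕ}
    (hr : IsGreatest {k | ∃ b ∈ BA B α, ∑ j, b j = α * k} r) (hB : BuchsbaumClasses B α)
    (hn : Minimal (¬ IsStandard c d α a ·) n) : degE n ≤ r + 1 := by
  by_cases hx : xOnly c d n
  · exact degE_le_of_minimal_of_xOnly hα hdeg hgens hstd hr hn hx
  · exact degE_le_of_minimal_of_not_xOnly hα hdeg hgens hstd hr hB hn hx

end DegreeBound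

section InitialIdeal

open MvPolynomial

variable {c d α : ℕ} {a : Fin c → Fin d → ℕ} {K : Type*} [Field K]
  {π : MvPolynomial (Fin (c + d)) K →ₐ[K] AddMonoidAlgebra K (Fin d → ℕ)}
  {σ : Fin (c + d) →₀ ℕ}

theorem map_monomial_eq_single
    (hπ : ∀ v, π (X v) = AddMonoidAlgebra.of' K (Fin d → ℕ) (gens c d α a v))
    (σ : Fin (c + d) →₀ ℕ) (k : K) :
    π (monomial σ k) = AddMonoidAlgebra.single (valE c d α a σ) k := by
  induction σ using Finsupp.induction with
  | zero =>
    rw [← C_apply, ← algebraMap_eq, AlgHom.commutes, show valE c d α a 0 = 0 by simp [valE]]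
    rfl
  | single_add v e f _ _ ih =>
    rw [monomial_single_add, map_mul, map_pow, hπ, ih, AddMonoidAlgebra.of'_apply,
      AddMonoidAlgebra.single_pow, AddMonoidAlgebra.single_mul_single, one_pow, one_mul,
      valE_add, valE_single]

theorem monomial_mem_initialIdeal {B : AddSubmonoid (Fin d → ℕ)}
    (hgens : ∀ v, gens c d α a v ∈ B)
    (hstd : ∀ b ∈ B, ∃ ρ, valE c d α a ρ = b ∧ IsStandard c d α a ρ)
    (hπ : ∀ v, π (X v) = AddMonoidAlgebra.of' K (Fin d → ℕ) (gens c d α a v))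
    (hσ : ¬ IsStandard c d α a σ) :
    monomial σ (1 : K) ∈ initialIdeal (RingHom.ker π.toRingHom) := by
  obtain ⟨ρ, hρ, hρstd⟩ := hstd _ (valE_mem hgens σ)
  have hρσ : ρ ≠ σ := fun h => hσ (h ▸ hρstd)
  refine Ideal.subset_span ⟨monomial σ 1 - monomial ρ 1, ?_, σ, ⟨?_, fun τ hτ => ?_⟩, rfl⟩
  · change π _ = 0
    rw [map_sub, map_monomial_eq_single hπ, map_monomial_eq_single hπ, hρ, sub_self]
  · simp [coeff_monomial, hρσ]
  · obtain rfl | rfl : σ = τ ∨ ρ = τ := by simpa using support_sub _ _ _ hτ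
    · exact Or.inl rfl
    · exact Or.inr ((hρstd σ hρ.symm).resolve_left hρσ.symm)

theorem not_isStandard_of_isLeadMon
    (hπ : ∀ v, π (X v) = AddMonoidAlgebra.of' K (Fin d → ℕ) (gens c d α a v))
    {f : MvPolynomial (Fin (c + d)) K} (hf : f ∈ RingHom.ker π.toRingHom)
    (hσ : IsLeadMon f σ) : ¬ IsStandard c d α a σ := fun hσstd => by
  have hcoeff : (π f).coeff (valE c d α a σ) = coeff σ f := by
    conv_lhs => rw [f.as_sum]
    simp only [map_sum, map_monomial_eq_single hπ, AddMonoidAlgebra.coeff_sum,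
      AddMonoidAlgebra.coeff_single, Finset.sum_apply', Finsupp.single_apply]
    rw [Finset.sum_eq_single_of_mem σ hσ.1 fun τ hτ hne => if_neg fun hval =>
      (hσ.2 τ hτ).elim hne (hσstd.not_grevlex hval), if_pos rfl]
  rw [show π f = 0 from hf] at hcoeff
  exact mem_support_iff.1 hσ.1 hcoeff.symm

theorem initialIdeal_ker_eq_span_minimal {B : AddSubmonoid (Fin d → ℕ)}
    (hgens : ∀ v, gens c d α a v ∈ B)
    (hstd : ∀ b ∈ B, ∃ ρ, valE c d α a ρ = b ∧ IsStandard c d α a ρ)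
    (hπ : ∀ v, π (X v) = AddMonoidAlgebra.of' K (Fin d → ℕ) (gens c d α a v)) :
    initialIdeal (RingHom.ker π.toRingHom) =
      Ideal.span ((fun n => monomial n (1 : K)) '' {n | Minimal (¬ IsStandard c d α a ·) n}) := by
  refine le_antisymm (Ideal.span_le.2 ?_) (Ideal.span_le.2 ?_)
  · rintro _ ⟨f, hf, σ, hσ, rfl⟩
    obtain ⟨n, hnσ, hn⟩ := exists_minimal_le_of_wellFoundedLT (¬ IsStandard c d α a ·) σ
      (not_isStandard_of_isLeadMon hπ hf hσ)
    rw [show monomial σ (1 : K) = monomial (σ - n) 1 * monomial n 1 by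
      rw [monomial_mul, one_mul, tsub_add_cancel_of_le hnσ]]
    exact Ideal.mul_mem_left _ _ (Ideal.subset_span ⟨n, hn, rfl⟩)
  · rintro _ ⟨n, hn, rfl⟩
    exact monomial_mem_initialIdeal hgens hstd hπ hn.1

end InitialIdeal

end SimplicialToric

open SimplicialToric

theorem degree_bound_of_buchsbaum_general
    (c d α : ℕ) (hα : 0 < α)
    (a : Fin c → Fin d → ℕ) (B : AddSubmonoid (Fin d → ℕ))
    (hBgen : B = AddSubmonoid.closure (Set.range a ∪ Set.range (eVec d α)))
    (hdeg : ∀ i, ∑ j, a i j = α)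
    (m : (Fin d → ℕ) → (Fin (c + d) →₀ ℕ))
    (hmval : ∀ b ∈ B, valE c d α a (m b) = b)
    (hmmin : ∀ b ∈ B, ∀ σ, valE c d α a σ = b → m b = σ ∨ grevlex (m b) σ)
    (K : Type*) [Field K]
    (π : MvPolynomial (Fin (c + d)) K →ₐ[K] AddMonoidAlgebra K (Fin d → ℕ))
    (hπ : ∀ v, π (MvPolynomial.X v) = AddMonoidAlgebra.of' K (Fin d → ℕ) (gens c d α a v))
    (r : ℕ) (hr : IsGreatest {k | ∃ b ∈ BA B α, ∑ j, b j = α * k} r)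
    (hBuch : ∀ Γ, IsClass B α Γ → ∀ h : Fin d → ℕ,
      (∀ j, IsLeast {v | ∃ b ∈ Γ, v = b j} (h j)) →
      (h ∈ Γ ∨ ((∀ b ∈ Γ, ∃ k : Fin d, b = fun j => h j + eVec d α k j) ∧
        (∀ k : Fin d, ∃ b ∈ Γ, b = fun j => h j + eVec d α k j) ∧
        ∀ hb ∈ Hilb B, h + hb ∈ B))) :
    ∃ Ns : Set (Fin (c + d) →₀ ℕ), (∀ n ∈ Ns, degE n ≤ r + 1) ∧
      initialIdeal (RingHom.ker π.toRingHom)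
        = Ideal.span ((fun n => MvPolynomial.monomial n (1 : K)) '' Ns) := by
  have hgens : ∀ v, gens c d α a v ∈ B := fun v => hBgen ▸ AddSubmonoid.subset_closure (by
    induction v using Fin.addCases <;> simp [gens])
  have hstd : ∀ b ∈ B, ∃ ρ, valE c d α a ρ = b ∧ IsStandard c d α a ρ := fun b hb =>
    ⟨m b, hmval b hb, fun τ hτ => (hmmin b hb τ (hτ.trans (hmval b hb))).imp_left Eq.symm⟩
  have hB : BuchsbaumClasses B α := fun Γ hΓ h hh =>
    (hBuch Γ hΓ h hh).imp_right fun ⟨hshape, hcorner, _⟩ =>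
      ⟨hshape, fun k => by obtain ⟨b, hb, rfl⟩ := hcorner k; exact hb⟩
  exact ⟨_, fun n hn => degE_le_of_minimal hα hdeg hgens hstd hr hB hn,
    initialIdeal_ker_eq_span_minimal hgens hstd hπ⟩

/-- If `K[B]` is Buchsbaum (expressed via the combinatorial
characterization of [BEN, Prop. 3.1(4)]: each ideal in the decomposition is `T` or the
maximal homogeneous ideal `T₊` with `hᵢ + b ∈ B` for all `b ∈ Hilb(B)`), then
`in_≺(ker π)` is generated in degrees `≤ r(K[B]) + 1`. -/
theorem degree_bound_of_buchsbaum
    (c d α : ℕ) (hα : 0 < α)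
    (a : Fin c → Fin d → ℕ) (B : AddSubmonoid (Fin d → ℕ))
    (hBgen : B = AddSubmonoid.closure (Set.range a ∪ Set.range (eVec d α)))
    (hhilb : Hilb B = Set.range a ∪ Set.range (eVec d α))
    (hdeg : ∀ i, ∑ j, a i j = α)
    (m : (Fin d → ℕ) → (Fin (c + d) →₀ ℕ))
    (hmval : ∀ b ∈ B, valE c d α a (m b) = b)
    (hmmin : ∀ b ∈ B, ∀ σ, valE c d α a σ = b → m b = σ ∨ grevlex (m b) σ)
    (K : Type*) [Field K]
    (π : MvPolynomial (Fin (c + d)) K →ₐ[K] AddMonoidAlgebra K (Fin d → ℕ))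
    (hπ : ∀ v, π (MvPolynomial.X v) = AddMonoidAlgebra.of' K (Fin d → ℕ) (gens c d α a v))
    (r : ℕ) (hr : IsGreatest {k | ∃ b ∈ BA B α, ∑ j, b j = α * k} r)
    (hBuch : ∀ Γ, IsClass B α Γ → ∀ h : Fin d → ℕ,
      (∀ j, IsLeast {v | ∃ b ∈ Γ, v = b j} (h j)) →
      (h ∈ Γ ∨ ((∀ b ∈ Γ, ∃ k : Fin d, b = fun j => h j + eVec d α k j) ∧
        (∀ k : Fin d, ∃ b ∈ Γ, b = fun j => h j + eVec d α k j) ∧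
        ∀ hb ∈ Hilb B, h + hb ∈ B))) :
    ∃ Ns : Set (Fin (c + d) →₀ ℕ), (∀ n ∈ Ns, degE n ≤ r + 1) ∧
      initialIdeal (RingHom.ker π.toRingHom)
        = Ideal.span ((fun n => MvPolynomial.monomial n (1 : K)) '' Ns) :=
  degree_bound_of_buchsbaum_general c d α hα a B hBgen hdeg m hmval hmmin K π hπ r hr hBuch
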